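/- Let n ≥ 2, let β be a real number, and set U = I + (2/(iβ−n))·J. Then for vectors Ψ = (ψ₁,…,ψₙ) and Ψ′ = (ψ′₁,…,ψ′ₙ) in ℂⁿ, the condition (U−I)Ψ + i(U+I)Ψ′ = 0 holds if and only if ψ′ⱼ = ψ′ₖ for all j, k ∈ {1,…,n} and ∑_{j=1}^n ψⱼ = β·ψ′₁. -/
import Mathlib

open Matrix BigOperators

theorem stmt_8 (n : ℕ) (hn : 2 ≤ n) (β : ℝ)
    (U : Matrix (Fin n) (Fin n) ℂ)
    (hU : U = 1 + (2 / (Complex.I * β - n)) • (Matrix.of fun _ _ => (1 : ℂ)))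
    (Ψ Ψ' : Fin n → ℂ) :
    (U - 1).mulVec Ψ + Complex.I • (U + 1).mulVec Ψ' = 0 ↔
    ((∀ j k : Fin n, Ψ' j = Ψ' k)
      ∧ (∑ j, Ψ j) = (β : ℂ) * Ψ' ⟨0, by omega⟩) := by
  have hdne : (Complex.I * β - n) ≠ 0 := by
    intro h
    have h2 := congrArg Complex.re h
    simp [Complex.sub_re, Complex.mul_re] at h2
    have : (2:ℝ) ≤ n := by exact_mod_cast hn
    linarith
  set d : ℂ := Complex.I * β - n with hd
  subst hU
  have hJ : ∀ Φ : Fin n → ℂ, (Matrix.of fun (_ _ : Fin n) => (1:ℂ)).mulVec Φ = fun _ => ∑ i, Φ i := by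
    intro Φ; funext j; simp [Matrix.mulVec, dotProduct]
  simp only [Matrix.sub_mulVec, Matrix.add_mulVec, Matrix.one_mulVec, Matrix.smul_mulVec,
    hJ, funext_iff, Pi.add_apply, Pi.smul_apply, Pi.sub_apply, Pi.zero_apply, smul_eq_mul]
  constructor
  · intro h
    have hconst : ∀ j k : Fin n, Ψ' j = Ψ' k := by
      intro j k
      have h2 : Complex.I * 2 * (Ψ' j - Ψ' k) = 0 := by linear_combination h j - h k
      rcases mul_eq_zero.mp h2 with h3 | h3
      · exact absurd h3 (by simp [Complex.I_ne_zero])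
      · exact sub_eq_zero.mp h3
    refine ⟨hconst, ?_⟩
    have hsum' : (∑ i, Ψ' i) = (n : ℂ) * Ψ' ⟨0, by omega⟩ := by
      rw [Finset.sum_congr rfl (fun i _ => hconst i ⟨0, by omega⟩)]
      simp [mul_comm]
    have h0 := h ⟨0, by omega⟩
    field_simp at h0
    linear_combination (1/2 : ℂ) * h0 - Complex.I * hsum'
      - (Complex.I * Ψ' ⟨0, by omega⟩) * hd - (β:ℂ) * Ψ' ⟨0, by omega⟩ * Complex.I_sq
  · rintro ⟨hconst, hsum⟩ j
    have hj : Ψ' j = Ψ' ⟨0, by omega⟩ := hconst j ⟨0, by omega⟩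
    have hsum' : (∑ i, Ψ' i) = (n : ℂ) * Ψ' ⟨0, by omega⟩ := by
      rw [Finset.sum_congr rfl (fun i _ => hconst i ⟨0, by omega⟩)]
      simp [mul_comm]
    field_simp
    rw [hd]
    linear_combination 2*hsum + 2*Complex.I*hsum'
      + (2*Complex.I*(Complex.I*(β:ℂ) - (n:ℂ)))*hj + 2*(β:ℂ)*Ψ' ⟨0, by omega⟩ * Complex.I_sq
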